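/- The explicit upwind scheme without source terms is total-variation diminishing: under the CFL condition δt'·φ'(h_max) ≤ min_i l_i on a uniform grid (l_i = l), if 0 ≤ h_i ≤ h_max for all i, then Σ_i |h_{i+1}^{new} − h_i^{new}| ≤ Σ_i |h_{i+1} − h_i|. -/
import Mathlib

/-- Slope bound: for `0 ≤ a < b ≤ hmax`, the slope of `φ` on `[a,b]` lies in
`[0, φ' hmax]`, by the mean value theorem and monotonicity of `φ'`. -/
lemma slope_bound_aux (φ φ' : ℝ → ℝ) (hmax : ℝ)
    (hderiv : ∀ x ≥ (0:ℝ), HasDerivAt φ (φ' x) x)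
    (hmono : MonotoneOn φ (Set.Ici (0:ℝ)))
    (hmono' : MonotoneOn φ' (Set.Ici (0:ℝ)))
    {a b : ℝ} (ha : 0 ≤ a) (hab : a < b) (hb : b ≤ hmax) :
    0 ≤ (φ b - φ a) / (b - a) ∧ (φ b - φ a) / (b - a) ≤ φ' hmax := by
  have hd : b - a > 0 := by linarith
  constructor
  · apply div_nonneg _ hd.le
    have := hmono (Set.mem_Ici.mpr ha) (Set.mem_Ici.mpr (by linarith : (0:ℝ) ≤ b)) hab.le
    linarith
  · obtain ⟨c, hc, hceq⟩ := exists_hasDerivAt_eq_slope φ φ' hab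
      (fun x hx => ((hderiv x (le_trans ha hx.1)).continuousAt).continuousWithinAt)
      (fun x hx => hderiv x (le_trans ha hx.1.le))
    rw [← hceq]
    exact hmono' (Set.mem_Ici.mpr (by linarith [hc.1] : (0:ℝ) ≤ c))
      (Set.mem_Ici.mpr (by linarith : (0:ℝ) ≤ hmax)) (by linarith [hc.2])

theorem stmt_10 (φ φ' : ℝ → ℝ) (hmax δt l : ℝ)
    (hhmax : hmax > 0) (hδt : δt > 0) (hl : l > 0)
    (hderiv : ∀ x ≥ (0:ℝ), HasDerivAt φ (φ' x) x)
    (hmono : MonotoneOn φ (Set.Ici (0:ℝ)))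
    (hmono' : MonotoneOn φ' (Set.Ici (0:ℝ)))
    (hCFL : δt * φ' hmax ≤ l)
    (h : ℤ → ℝ) (hbound : ∀ i, 0 ≤ h i ∧ h i ≤ hmax)
    (hsum : Summable (fun i : ℤ => |h (i+1) - h i|))
    (hnew : ℤ → ℝ)
    (hnewdef : ∀ i, hnew i = h i + (δt / l) * (φ (h (i-1)) - φ (h i))) :
    (∑' i : ℤ, |hnew (i+1) - hnew i|) ≤ ∑' i : ℤ, |h (i+1) - h i| := by
  set Δ : ℤ → ℝ := fun i => h (i+1) - h i with hΔ
  set c : ℤ → ℝ := fun i =>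
    if h (i+1) = h i then 0 else δt / l * ((φ (h (i+1)) - φ (h i)) / (h (i+1) - h i)) with hc
  have hδl : (0:ℝ) < δt / l := div_pos hδt hl
  -- slope bounds for any pair of data values
  have hslope : ∀ i : ℤ, h (i+1) ≠ h i →
      0 ≤ (φ (h (i+1)) - φ (h i)) / (h (i+1) - h i) ∧
      (φ (h (i+1)) - φ (h i)) / (h (i+1) - h i) ≤ φ' hmax := by
    intro i hne
    rcases lt_or_gt_of_ne hne with hlt | hgt
    · have := slope_bound_aux φ φ' hmax hderiv hmono hmono'
        (hbound (i+1)).1 hlt (hbound i).2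
      have hrw : (φ (h (i+1)) - φ (h i)) / (h (i+1) - h i)
          = (φ (h i) - φ (h (i+1))) / (h i - h (i+1)) := by
        rw [← neg_div_neg_eq]; ring_nf
      rw [hrw]; exact this
    · exact slope_bound_aux φ φ' hmax hderiv hmono hmono' (hbound i).1 hgt (hbound (i+1)).2
  have hc0 : ∀ i, 0 ≤ c i := by
    intro i
    simp only [hc]
    split_ifs with he
    · exact le_refl 0
    · exact mul_nonneg hδl.le (hslope i he).1
  have hc1 : ∀ i, c i ≤ 1 := by
    intro i
    simp only [hc]
    split_ifs with he
    · norm_num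
    · have h1 : δt / l * ((φ (h (i+1)) - φ (h i)) / (h (i+1) - h i)) ≤ δt / l * φ' hmax :=
        mul_le_mul_of_nonneg_left (hslope i he).2 hδl.le
      have h2 : δt / l * φ' hmax ≤ 1 := by
        rw [div_mul_eq_mul_div, div_le_one hl]; exact hCFL
      linarith
  have hceq : ∀ i, δt / l * (φ (h (i+1)) - φ (h i)) = c i * (h (i+1) - h i) := by
    intro i
    simp only [hc]
    split_ifs with he
    · rw [he]; ring
    · have hd : h (i+1) - h i ≠ 0 := sub_ne_zero_of_ne he
      field_simp
  -- the key pointwise bound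
  have key : ∀ i : ℤ, |hnew (i+1) - hnew i| ≤ (1 - c i) * |Δ i| + c (i-1) * |Δ (i-1)| := by
    intro i
    have e1 : hnew (i+1) - hnew i = (1 - c i) * Δ i + c (i-1) * Δ (i-1) := by
      have d1 := hnewdef (i+1)
      have d2 := hnewdef i
      have s1 : (i:ℤ) + 1 - 1 = i := by ring
      have s2 : (i:ℤ) - 1 + 1 = i := by ring
      rw [s1] at d1
      have e2 := hceq i
      have e3 := hceq (i-1)
      rw [s2] at e3
      show hnew (i+1) - hnew i = (1 - c i) * (h (i+1) - h i) + c (i-1) * (h (i-1+1) - h (i-1))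
      rw [s2, d1, d2]
      linear_combination e3 - e2
    rw [e1]
    calc |(1 - c i) * Δ i + c (i-1) * Δ (i-1)|
        ≤ |(1 - c i) * Δ i| + |c (i-1) * Δ (i-1)| := abs_add_le _ _
      _ = (1 - c i) * |Δ i| + c (i-1) * |Δ (i-1)| := by
          rw [abs_mul, abs_mul, abs_of_nonneg (by linarith [hc1 i] : (0:ℝ) ≤ 1 - c i),
            abs_of_nonneg (hc0 (i-1))]
  -- summability facts
  have S1 : Summable (fun i : ℤ => (1 - c i) * |Δ i|) := by
    apply Summable.of_nonneg_of_le
      (fun i => mul_nonneg (by linarith [hc1 i]) (abs_nonneg _))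
      (fun i => by
        have := mul_le_of_le_one_left (abs_nonneg (Δ i)) (by linarith [hc0 i] : 1 - c i ≤ 1)
        simpa using this) hsum
  have S2 : Summable (fun i : ℤ => c i * |Δ i|) := by
    apply Summable.of_nonneg_of_le
      (fun i => mul_nonneg (hc0 i) (abs_nonneg _))
      (fun i => by
        have := mul_le_of_le_one_left (abs_nonneg (Δ i)) (hc1 i)
        simpa using this) hsum
  have S3 : Summable (fun i : ℤ => c (i-1) * |Δ (i-1)|) :=
    S2.comp_injective (Equiv.subRight (1:ℤ)).injective
  have Snew : Summable (fun i : ℤ => |hnew (i+1) - hnew i|) :=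
    Summable.of_nonneg_of_le (fun i => abs_nonneg _) key (S1.add S3)
  calc (∑' i : ℤ, |hnew (i+1) - hnew i|)
      ≤ ∑' i : ℤ, ((1 - c i) * |Δ i| + c (i-1) * |Δ (i-1)|) :=
        Summable.tsum_le_tsum key Snew (S1.add S3)
    _ = (∑' i : ℤ, (1 - c i) * |Δ i|) + ∑' i : ℤ, c (i-1) * |Δ (i-1)| := Summable.tsum_add S1 S3
    _ = (∑' i : ℤ, (1 - c i) * |Δ i|) + ∑' i : ℤ, c i * |Δ i| := by
        congr 1
        exact (Equiv.subRight (1:ℤ)).tsum_eq (fun i => c i * |Δ i|)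
    _ = ∑' i : ℤ, ((1 - c i) * |Δ i| + c i * |Δ i|) := (Summable.tsum_add S1 S2).symm
    _ = ∑' i : ℤ, |Δ i| := by
        congr 1; funext i; ring
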